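/- Let n ≥ 3 and let S_n be the monoid presented by generators a_1, …, a_n and relations a_1 a_2 ⋯ a_n = a_{σ(1)} ⋯ a_{σ(n)} for σ in the cyclic group generated by the n-cycle. Let P = (a_1 a_2 ⋯ a_n)·S_n. Then P is a prime ideal of the monoid S_n: P is a two-sided ideal (S_n·P ⊆ P and P·S_n ⊆ P), and for all a, b ∈ S_n \ P there exists s ∈ S_n such that a·s·b ∉ P. -/

import Mathlib

/-- The word `a_{σ(1)} a_{σ(2)} ⋯ a_{σ(n)}` in the free monoid on `n` generators. -/
def permWord (n : ℕ) (σ : Equiv.Perm (Fin n)) : FreeMonoid (Fin n) :=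
  ((List.finRange n).map fun i => FreeMonoid.of (σ i)).prod

/-- The defining relations `a_1 a_2 ⋯ a_n = a_{σ(1)} a_{σ(2)} ⋯ a_{σ(n)}`, where `σ` runs
through the cyclic subgroup of `Sym_n` generated by the `n`-cycle `(1,2,…,n)` (i.e. `finRotate n`). -/
def cycRel (n : ℕ) : FreeMonoid (Fin n) → FreeMonoid (Fin n) → Prop :=
  fun x y => x = permWord n 1 ∧ ∃ k : ℕ, y = permWord n (finRotate n ^ k)

/-- The monoid `S_n` presented by generators `a_1, …, a_n` and the above relations. -/
def Scyc (n : ℕ) : Type := (conGen (cycRel n)).Quotient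

instance (n : ℕ) : Monoid (Scyc n) := Con.monoid _

/-- The generator `a_i` of `S_n`. -/
def agen {n : ℕ} (i : Fin n) : Scyc n := (conGen (cycRel n)).mk' (FreeMonoid.of i)

/-- The element `z = a_1 a_2 ⋯ a_n` of `S_n`. -/
def zc (n : ℕ) : Scyc n := ((List.finRange n).map agen).prod

/-!
Each defining relation identifies two cyclic rotations of the word `a_1 ⋯ a_n`, so the relation
"equal, or both containing a rotation of `a_1 ⋯ a_n` as a factor" is a congruence on the free
monoid that contains the relations. Together with the centrality of `z` (which holds because
`a_i z = a_i (a_{i+1} ⋯ a_{i-1} a_i) = z a_i`), this shows that an element lies in `P` exactly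
when a word representing it contains a rotation as a factor.

For words `u, v` without such a factor, at most one letter `i` makes `u a_i` end in a rotation
and at most one makes `a_i v` start with one, because a rotation is determined by all but one of
its letters. With `n ≥ 3` letters some `i` is neither, and then `u a_i a_i v` contains no
rotation, since a rotation has no repeated letter.
-/

namespace List

variable {α : Type*} {R : List α}

def HasRotationInfix (R w : List α) : Prop := ∃ r, r ~r R ∧ r <:+: w

theorem HasRotationInfix.of_infix {w w' : List α} (h : HasRotationInfix R w) (hw : w <:+: w') :
    HasRotationInfix R w' :=
  let ⟨r, hr, hrw⟩ := h; ⟨r, hr, hrw.trans hw⟩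

theorem setOf_isRotated_suffix_concat_subsingleton (hR : R ≠ []) (u : List α) :
    {i | ∃ r, r ~r R ∧ r <:+ u ++ [i]}.Subsingleton := by
  have hne {r} (hr : r ~r R) : r ≠ [] := fun h => hR (isRotated_nil_iff'.mp (h ▸ hr)).symm
  rintro i ⟨r, hr, hru⟩ j ⟨s, hs, hsu⟩
  obtain h | ⟨t, rfl, ht⟩ := suffix_concat_iff.mp hru
  · exact absurd h (hne hr)
  obtain h | ⟨t', rfl, ht'⟩ := suffix_concat_iff.mp hsu
  · exact absurd h (hne hs)
  have hlen : t.length = t'.length := by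
    simpa using hr.perm.length_eq.trans hs.perm.length_eq.symm
  obtain rfl : t = t' := (suffix_of_suffix_length_le ht ht' hlen.le).eq_of_length hlen
  exact singleton_perm_singleton.mp ((perm_append_left_iff t).mp (hr.perm.trans hs.perm.symm))

theorem setOf_isRotated_prefix_cons_subsingleton (hR : R ≠ []) (v : List α) :
    {i | ∃ r, r ~r R ∧ r <+: i :: v}.Subsingleton :=
  (setOf_isRotated_suffix_concat_subsingleton (reverse_ne_nil_iff.mpr hR) v.reverse).anti
    fun _ ⟨r, hr, hrv⟩ => ⟨r.reverse, hr.reverse, reverse_cons ▸ reverse_suffix.mpr hrv⟩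

theorem HasRotationInfix.of_append_cons_cons (hR : R.Nodup) {u v : List α} {i : α}
    (h : HasRotationInfix R (u ++ i :: i :: v)) :
    HasRotationInfix R u ∨ HasRotationInfix R v ∨
      (∃ r, r ~r R ∧ r <:+ u ++ [i]) ∨ (∃ r, r ~r R ∧ r <+: i :: v) := by
  obtain ⟨r, hr, hrw⟩ := h
  rw [show u ++ i :: i :: v = (u ++ [i]) ++ i :: v by simp, infix_append_iff] at hrw
  rcases hrw with hru | hrv | ⟨l₁, l₂, rfl, hl₁, hl₂⟩
  · rcases infix_concat_iff.mp hru with hsuf | hinf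
    · exact .inr (.inr (.inl ⟨_, hr, hsuf⟩))
    · exact .inl ⟨_, hr, hinf⟩
  · rcases infix_cons_iff.mp hrv with hpre | hinf
    · exact .inr (.inr (.inr ⟨_, hr, hpre⟩))
    · exact .inr (.inl ⟨_, hr, hinf⟩)
  obtain rfl | ⟨t, rfl, -⟩ := suffix_concat_iff.mp hl₁
  · exact .inr (.inr (.inr ⟨_, hr, hl₂⟩))
  obtain rfl | ⟨t', rfl, -⟩ := prefix_cons_iff.mp hl₂
  · exact .inr (.inr (.inl ⟨_, hr, by simpa using hl₁⟩))
  exact absurd (hr.nodup_iff.mpr hR) (by simp [nodup_append])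

theorem exists_not_hasRotationInfix_append_cons_cons [Finite α] (hα : 3 ≤ Nat.card α)
    (hR : R.Nodup) {u v : List α} (hu : ¬ HasRotationInfix R u) (hv : ¬ HasRotationInfix R v) :
    ∃ i, ¬ HasRotationInfix R (u ++ i :: i :: v) := by
  have hR₀ : R ≠ [] := by
    rintro rfl
    exact hu ⟨[], IsRotated.refl _, nil_infix⟩
  by_contra! hbad
  have hcover : (Set.univ : Set α) ⊆
      {i | ∃ r, r ~r R ∧ r <:+ u ++ [i]} ∪ {i | ∃ r, r ~r R ∧ r <+: i :: v} := fun i _ => by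
    rcases (hbad i).of_append_cons_cons hR with h | h | h | h
    exacts [absurd h hu, absurd h hv, .inl h, .inr h]
  have hcard := (Set.ncard_le_ncard hcover).trans (Set.ncard_union_le _ _)
  rw [Set.ncard_univ] at hcard
  have hsuf := Set.ncard_le_one_iff_subsingleton.mpr
    (setOf_isRotated_suffix_concat_subsingleton hR₀ u)
  have hpre := Set.ncard_le_one_iff_subsingleton.mpr
    (setOf_isRotated_prefix_cons_subsingleton hR₀ v)
  omega

theorem map_finRotate_finRange (n : ℕ) :
    (finRange n).map (finRotate n) = (finRange n).rotate 1 := by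
  cases n with
  | zero => rfl
  | succ m =>
    conv_lhs => rw [finRange_succ_last, map_append, map_map, map_singleton, finRotate_last]
    rw [finRange_succ, rotate_cons_succ, rotate_zero]
    simp

theorem map_finRotate_pow_finRange (n k : ℕ) :
    (finRange n).map ⇑(finRotate n ^ k) = (finRange n).rotate k := by
  induction k with
  | zero => simp
  | succ k ih =>
    rw [pow_succ, Equiv.Perm.coe_mul, ← map_map, map_finRotate_finRange, map_rotate, ih,
      rotate_rotate]

end List

section

open List

theorem toList_permWord (n : ℕ) (σ : Equiv.Perm (Fin n)) :
    (permWord n σ).toList = (finRange n).map σ := by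
  rw [permWord, FreeMonoid.toList_prod, map_map, ← flatMap_def, map_eq_flatMap]
  rfl

theorem permWord_finRotate_pow (n k : ℕ) :
    permWord n (finRotate n ^ k) = .ofList ((finRange n).rotate k) := by
  rw [← FreeMonoid.ofList_toList (permWord n _), toList_permWord, map_finRotate_pow_finRange]

theorem permWord_one (n : ℕ) : permWord n 1 = .ofList (finRange n) := by
  simpa using permWord_finRotate_pow n 0

namespace FreeMonoid

variable {α : Type*}

def rotationCon (R : List α) : Con (FreeMonoid α) where
  r x y := x = y ∨ (R.HasRotationInfix x.toList ∧ R.HasRotationInfix y.toList)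
  iseqv :=
    { refl := fun _ => .inl rfl
      symm := fun h => h.imp Eq.symm And.symm
      trans := by
        rintro x y z (rfl | ⟨hx, hy⟩) h
        · exact h
        · rcases h with rfl | ⟨-, hz⟩
          exacts [.inr ⟨hx, hy⟩, .inr ⟨hx, hz⟩] }
  mul' := by
    rintro w x y z (rfl | ⟨hw, hx⟩) hyz
    · rcases hyz with rfl | ⟨hy, hz⟩
      · exact .inl rfl
      · exact .inr ⟨hy.of_infix infix_append_right, hz.of_infix infix_append_right⟩
    · exact .inr ⟨hw.of_infix infix_append_left, hx.of_infix infix_append_left⟩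

end FreeMonoid

namespace Scyc

variable {n : ℕ}

def mk (n : ℕ) : FreeMonoid (Fin n) →* Scyc n := (conGen (cycRel n)).mk'

theorem mk_surjective : Function.Surjective (mk n) := Con.mk'_surjective

theorem mk_of (i : Fin n) : mk n (FreeMonoid.of i) = agen i := rfl

theorem mk_ofList (l : List (Fin n)) : mk n (.ofList l) = (l.map agen).prod := by
  induction l with
  | nil => exact map_one _
  | cons i l ih => rw [FreeMonoid.ofList_cons, map_mul, ih, map_cons, prod_cons, mk_of]

theorem zc_eq_mk : zc n = mk n (.ofList (finRange n)) := (mk_ofList _).symm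

theorem conGen_cycRel_le : conGen (cycRel n) ≤ FreeMonoid.rotationCon (finRange n) := by
  rw [Con.conGen_le]
  rintro x y ⟨rfl, k, rfl⟩
  rw [permWord_one, permWord_finRotate_pow]
  exact .inr ⟨⟨_, IsRotated.refl _, infix_refl _⟩, ⟨_, IsRotated.symm ⟨k, rfl⟩, infix_refl _⟩⟩

theorem eq_or_hasRotationInfix_of_mk_eq {x y : FreeMonoid (Fin n)} (h : mk n x = mk n y) :
    x = y ∨ ((finRange n).HasRotationInfix x.toList ∧ (finRange n).HasRotationInfix y.toList) :=
  conGen_cycRel_le ((Con.eq _).mp h)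

theorem mk_ofList_of_isRotated {r : List (Fin n)} (hr : r ~r finRange n) :
    mk n (.ofList r) = zc n := by
  obtain ⟨k, rfl⟩ := hr.symm
  rw [zc_eq_mk, ← permWord_finRotate_pow, ← permWord_one]
  exact ((Con.eq _).mpr (ConGen.Rel.of _ _ ⟨rfl, k, rfl⟩)).symm

theorem commute_agen_zc (i : Fin n) : Commute (agen i) (zc n) := by
  obtain ⟨s, t, hst⟩ := append_of_mem (mem_finRange i)
  have h₁ : i :: (t ++ s) ~r finRange n := by
    rw [hst]
    exact (isRotated_append (l := s) (l' := i :: t)).symm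
  have h₂ : (t ++ s) ++ [i] ~r finRange n := (isRotated_concat _ _).trans h₁
  calc agen i * zc n = agen i * mk n (.ofList (t ++ s)) * agen i := by
        rw [← mk_ofList_of_isRotated h₂, FreeMonoid.ofList_append, map_mul, mul_assoc,
          FreeMonoid.ofList_singleton, mk_of]
    _ = zc n * agen i := by
        rw [← mk_ofList_of_isRotated h₁, FreeMonoid.ofList_cons, map_mul, mk_of]

theorem commute_zc (x : Scyc n) : Commute (zc n) x := by
  obtain ⟨w, rfl⟩ := mk_surjective x
  induction w using FreeMonoid.inductionOn' with
  | one => rw [map_one]; exact Commute.one_right _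
  | of_mul i w ih => rw [map_mul, mk_of]; exact (commute_agen_zc i).symm.mul_right ih

theorem exists_mk_eq_zc_mul_iff (w : FreeMonoid (Fin n)) :
    (∃ s, mk n w = zc n * s) ↔ (finRange n).HasRotationInfix w.toList := by
  constructor
  · rintro ⟨s, hs⟩
    obtain ⟨t, rfl⟩ := mk_surjective s
    rw [zc_eq_mk, ← map_mul] at hs
    rcases eq_or_hasRotationInfix_of_mk_eq hs with rfl | ⟨hw, -⟩
    · exact ⟨_, IsRotated.refl _, infix_append_left⟩
    · exact hw
  · rintro ⟨r, hr, p, q, hw⟩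
    refine ⟨mk n (.ofList p) * mk n (.ofList q), ?_⟩
    rw [← FreeMonoid.ofList_toList w, ← hw, FreeMonoid.ofList_append, FreeMonoid.ofList_append,
      map_mul, map_mul, mk_ofList_of_isRotated hr, ← (commute_zc _).eq, mul_assoc]

end Scyc

end

/-- `P = (a_1 ⋯ a_n) S_n` is a prime ideal of the monoid `S_n`:
it is a two-sided ideal and for all `a, b ∉ P` there is `s` with `a s b ∉ P`. -/
theorem P_prime_monoid_ideal (n : ℕ) (hn : 3 ≤ n) :
    ∀ P : Set (Scyc n), P = {x | ∃ s, x = zc n * s} →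
      (∀ p ∈ P, ∀ s : Scyc n, s * p ∈ P ∧ p * s ∈ P) ∧
      (∀ a b : Scyc n, a ∉ P → b ∉ P → ∃ s : Scyc n, a * s * b ∉ P) := by
  rintro P rfl
  refine ⟨?_, ?_⟩
  · rintro _ ⟨t, rfl⟩ s
    exact ⟨⟨s * t, (Scyc.commute_zc s).symm.left_comm t⟩, ⟨t * s, mul_assoc _ _ _⟩⟩
  · intro a b ha hb
    obtain ⟨u, rfl⟩ := Scyc.mk_surjective a
    obtain ⟨v, rfl⟩ := Scyc.mk_surjective b
    rw [Set.mem_ofPred_eq, Scyc.exists_mk_eq_zc_mul_iff] at ha hb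
    obtain ⟨i, hi⟩ := List.exists_not_hasRotationInfix_append_cons_cons (by simpa using hn)
      (List.nodup_finRange n) ha hb
    refine ⟨agen i * agen i, ?_⟩
    rw [Set.mem_ofPred_eq, ← Scyc.mk_of, ← map_mul, ← map_mul, ← map_mul,
      Scyc.exists_mk_eq_zc_mul_iff]
    simpa using hi
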